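/- If 𝒢 = (g_j)_{j∈V} is a guessing strategy on a finite directed graph G over an alphabet A of size s whose set C ⊆ A^V of fixpoints (points where all players guess correctly) is nonempty, then the uniform probability distribution on C satisfies the information constraints of G and has H(V) = log_s |C|. Consequently g(G,s) ≤ E(G,s). -/

import Mathlib

open Finset

/-! ## Basic setup: directed graphs, guessing games, entropy (Riis, "Graph Entropy,
Network Coding and Guessing games"). -/

/-- The set `N⁻(j)` of in-neighbours of a vertex `j` in the directed graph given by
the edge relation `E` (an edge `(i,j)` is `E i j`). -/
def inNbr {V : Type*} [Fintype V] (E : V → V → Prop) [DecidableRel E] (j : V) : Finset V :=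
  Finset.univ.filter (fun i => E i j)

/-- `p` is a probability distribution on `V → A`. -/
def IsProbDist {V A : Type*} [Fintype V] [DecidableEq V] [Fintype A] (p : (V → A) → ℝ) : Prop :=
  (∀ x, 0 ≤ p x) ∧ ∑ x : V → A, p x = 1

/-- The marginal probability, under `p`, that the coordinates in `S` agree with `y`. -/
noncomputable def marginalPMF {V A : Type*} [Fintype V] [DecidableEq V] [Fintype A] [DecidableEq A]
    (p : (V → A) → ℝ) (S : Finset V) (y : ↥S → A) : ℝ :=
  ∑ x : V → A, if ∀ i : ↥S, x i.1 = y i then p x else 0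

/-- `Hent s p S` : the base-`s` Shannon entropy of the marginal of `p` on the
coordinates in `S` (using `Real.negMulLog`, so the convention `0·log(1/0) = 0` holds). -/
noncomputable def Hent {V A : Type*} [Fintype V] [DecidableEq V] [Fintype A] [DecidableEq A]
    (s : ℕ) (p : (V → A) → ℝ) (S : Finset V) : ℝ :=
  (∑ y : ↥S → A, Real.negMulLog (marginalPMF p S y)) / Real.log s

/-- `p` satisfies the information constraints of the graph: `H(j | N⁻(j)) = 0` for every
vertex `j`, where `H(X | Y) = H(X ∪ Y) − H(Y)`. -/
def InfoConstraints {V A : Type*} [Fintype V] [DecidableEq V] [Fintype A] [DecidableEq A]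
    (E : V → V → Prop) [DecidableRel E] (s : ℕ) (p : (V → A) → ℝ) : Prop :=
  ∀ j : V, Hent s p (insert j (inNbr E j)) - Hent s p (inNbr E j) = 0

/-- The (private) entropy `E(G,s)` of the graph over an alphabet of size `s`:
the sup of `H_p(V)` over probability distributions on `A^V` (`A = Fin s`)
satisfying the information constraints of the graph. -/
noncomputable def graphEntropy {V : Type*} [Fintype V] [DecidableEq V]
    (E : V → V → Prop) [DecidableRel E] (s : ℕ) : ℝ :=
  sSup {h : ℝ | ∃ p : (V → Fin s) → ℝ,
    IsProbDist p ∧ InfoConstraints E s p ∧ h = Hent s p Finset.univ}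

/-- The general entropy `E(G) = sup_{s ≥ 2} E(G,s)`. -/
noncomputable def genEntropy {V : Type*} [Fintype V] [DecidableEq V]
    (E : V → V → Prop) [DecidableRel E] : ℝ :=
  sSup {h : ℝ | ∃ s : ℕ, 2 ≤ s ∧ h = graphEntropy E s}

/-- A guessing strategy: each vertex `j` guesses a value `g j x` which may only depend on
the values `x i` for in-neighbours `i` of `j`. -/
def IsStrategy {V A : Type*} (E : V → V → Prop) (g : V → (V → A) → A) : Prop :=
  ∀ j x y, (∀ i, E i j → x i = y i) → g j x = g j y

/-- The set of assignments at which all players guess correctly. -/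
def correctSet {V A : Type*} [Fintype V] [DecidableEq V] [Fintype A] [DecidableEq A]
    (g : V → (V → A) → A) : Finset (V → A) :=
  Finset.univ.filter (fun x => ∀ j, g j x = x j)

/-- The maximal number of assignments at which all players guess correctly,
over all guessing strategies (over the alphabet `Fin s`). -/
noncomputable def maxCorrect {V : Type*} [Fintype V] [DecidableEq V]
    (E : V → V → Prop) [DecidableRel E] (s : ℕ) : ℕ :=
  sSup {m : ℕ | ∃ g : V → (V → Fin s) → Fin s, IsStrategy E g ∧ m = (correctSet g).card}

/-- The maximal probability (with `x` uniform on `A^V`) that all players guess correctly. -/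
noncomputable def maxProb {V : Type*} [Fintype V] [DecidableEq V]
    (E : V → V → Prop) [DecidableRel E] (s : ℕ) : ℝ :=
  (maxCorrect E s : ℝ) / (s : ℝ) ^ Fintype.card V

/-- The guessing number `g(G,s)`: the unique `α` with maximal success probability
`(1/s)^(n−α)`, i.e. `α = n + log_s (maximal probability)`. -/
noncomputable def guessingNumber {V : Type*} [Fintype V] [DecidableEq V]
    (E : V → V → Prop) [DecidableRel E] (s : ℕ) : ℝ :=
  (Fintype.card V : ℝ) + Real.logb s (maxProb E s)

/-- The general guessing number `g(G) = sup_{s ≥ 2} g(G,s)`. -/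
noncomputable def genGuessing {V : Type*} [Fintype V] [DecidableEq V]
    (E : V → V → Prop) [DecidableRel E] : ℝ :=
  sSup {h : ℝ | ∃ s : ℕ, 2 ≤ s ∧ h = guessingNumber E s}

/-! ## Entropy-like functions -/

/-- An S-entropy-like function: `f ∅ = 0`, monotone and submodular (the polymatroidal
axioms, equivalently Shannon's information inequalities). -/
def SEntLike {U : Type*} [DecidableEq U] (f : Finset U → ℝ) : Prop :=
  f ∅ = 0 ∧ (∀ X Y, X ⊆ Y → f X ≤ f Y) ∧ ∀ X Y, f (X ∩ Y) + f (X ∪ Y) ≤ f X + f Y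

/-- Mutual information `I_f(X;Y|Z)` of an entropy-like function. -/
def mutI {U : Type*} [DecidableEq U] (f : Finset U → ℝ) (X Y Z : Finset U) : ℝ :=
  f (X ∪ Z) + f (Y ∪ Z) - f (X ∪ Y ∪ Z) - f Z

/-- A Zhang–Yeung entropy-like function: S-entropy-like and satisfying the ZY
non-Shannon information inequality for all `A B C D`. -/
def ZYEntLike {U : Type*} [DecidableEq U] (f : Finset U → ℝ) : Prop :=
  SEntLike f ∧ ∀ A B C D : Finset U,
    2 * mutI f C D ∅ ≤ mutI f A B ∅ + mutI f A (C ∪ D) ∅ + 3 * mutI f C D A + mutI f C D B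

/-- `f` satisfies the information constraints of the graph:
`f(N⁻(j) ∪ {j}) = f(N⁻(j))` for every vertex `j`. -/
def FConstraints {V : Type*} [Fintype V] [DecidableEq V]
    (E : V → V → Prop) [DecidableRel E] (f : Finset V → ℝ) : Prop :=
  ∀ j : V, f (insert j (inNbr E j)) = f (inNbr E j)

/-- The S-entropy `E_S(G)`: the maximal value of `f(V)` over normalized S-entropy-like
functions satisfying the information constraints of `G`. -/
noncomputable def SEnt {V : Type*} [Fintype V] [DecidableEq V]
    (E : V → V → Prop) [DecidableRel E] : ℝ :=
  sSup {h : ℝ | ∃ f : Finset V → ℝ,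
    SEntLike f ∧ (∀ j : V, f {j} ≤ 1) ∧ FConstraints E f ∧ h = f Finset.univ}

/-- The ZY-entropy `E_ZY(G)`. -/
noncomputable def ZYEnt {V : Type*} [Fintype V] [DecidableEq V]
    (E : V → V → Prop) [DecidableRel E] : ℝ :=
  sSup {h : ℝ | ∃ f : Finset V → ℝ,
    ZYEntLike f ∧ (∀ j : V, f {j} ≤ 1) ∧ FConstraints E f ∧ h = f Finset.univ}

/-! ## Acyclicity -/

/-- The subgraph induced on `S` is acyclic: no directed cycle within `S`. -/
def AcyclicOn {V : Type*} (E : V → V → Prop) (S : Finset V) : Prop :=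
  ∀ v ∈ S, ¬ Relation.TransGen (fun a b => a ∈ S ∧ b ∈ S ∧ E a b) v v

/-- The acyclic independence number: the maximal size of a vertex set inducing an
acyclic subgraph. -/
noncomputable def acycIndepNum {V : Type*} [Fintype V] (E : V → V → Prop) : ℕ :=
  sSup {k : ℕ | ∃ S : Finset V, AcyclicOn E S ∧ k = S.card}

/-! ## Index codes -/

/-- An index code protocol: a broadcast map `Φ` together with decoding functions `d j`
(depending only on the in-neighbour values and the broadcast message) recovering `x j`. -/
def IsIndexCode {V A W : Type*} (E : V → V → Prop)
    (Φ : (V → A) → W) (d : V → (V → A) → W → A) : Prop :=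
  (∀ (j : V) (x y : V → A) (w : W), (∀ i, E i j → x i = y i) → d j x w = d j y w) ∧
  ∀ (x : V → A) (j : V), d j x (Φ x) = x j

/-- The length `log_s |Φ(A^V)|` of an index code protocol. -/
noncomputable def protocolLength {V A W : Type*} [Fintype V] [DecidableEq V] [Fintype A]
    [Fintype W] [DecidableEq W] (s : ℕ) (Φ : (V → A) → W) : ℝ :=
  Real.logb s ((Finset.univ.image Φ).card)

/-- The base-`s` entropy of the broadcast message `Φ(x)` for `x` uniform on `A^V`. -/
noncomputable def protocolEntropy {V A W : Type*} [Fintype V] [DecidableEq V] [Fintype A]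
    [DecidableEq A] [Fintype W] [DecidableEq W] (s : ℕ) (Φ : (V → A) → W) : ℝ :=
  (∑ w : W, Real.negMulLog
    (((Finset.univ.filter (fun x : V → A => Φ x = w)).card : ℝ) / (s : ℝ) ^ Fintype.card V))
    / Real.log s

/-- `i(G,s)`: the minimal length of an index code for `G` over `Fin s`. -/
noncomputable def indexCodeLen {V : Type*} [Fintype V] [DecidableEq V]
    (E : V → V → Prop) [DecidableRel E] (s : ℕ) : ℝ :=
  sInf {h : ℝ | ∃ (W : Type) (iW : Fintype W) (dW : DecidableEq W)
    (Φ : (V → Fin s) → W) (d : V → (V → Fin s) → W → Fin s),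
    IsIndexCode E Φ d ∧ h = @protocolLength V (Fin s) W _ _ _ iW dW s Φ}

/-- `i_entro(G,s)`: the minimal entropy of an index code for `G` over `Fin s`. -/
noncomputable def indexCodeEntro {V : Type*} [Fintype V] [DecidableEq V]
    (E : V → V → Prop) [DecidableRel E] (s : ℕ) : ℝ :=
  sInf {h : ℝ | ∃ (W : Type) (iW : Fintype W) (dW : DecidableEq W)
    (Φ : (V → Fin s) → W) (d : V → (V → Fin s) → W → Fin s),
    IsIndexCode E Φ d ∧ h = @protocolEntropy V (Fin s) W _ _ _ _ iW dW s Φ}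

/-- The information constraints on `V ∪ {w}` (`w = none`) used to define the S/ZY-minimal
index code: `f(N⁻(j) ∪ {w} ∪ {j}) = f(N⁻(j) ∪ {w})` for each `j`, `f(V ∪ {w}) = f(V)`
and `f(V) = n`. -/
def WConstraints {V : Type*} [Fintype V] [DecidableEq V]
    (E : V → V → Prop) [DecidableRel E] (f : Finset (Option V) → ℝ) : Prop :=
  (∀ j : V, f (insert (some j) (insert none ((inNbr E j).image some)))
      = f (insert none ((inNbr E j).image some))) ∧
  f (insert none ((Finset.univ : Finset V).image some))
      = f ((Finset.univ : Finset V).image some) ∧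
  f ((Finset.univ : Finset V).image some) = (Fintype.card V : ℝ)

/-- The S-minimal index code `i_S(G)`. -/
noncomputable def iS {V : Type*} [Fintype V] [DecidableEq V]
    (E : V → V → Prop) [DecidableRel E] : ℝ :=
  sInf {h : ℝ | ∃ f : Finset (Option V) → ℝ,
    SEntLike f ∧ (∀ j : V, f {some j} ≤ 1) ∧ WConstraints E f ∧ h = f {none}}

/-- The ZY-minimal index code `i_ZY(G)`. -/
noncomputable def iZY {V : Type*} [Fintype V] [DecidableEq V]
    (E : V → V → Prop) [DecidableRel E] : ℝ :=
  sInf {h : ℝ | ∃ f : Finset (Option V) → ℝ,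
    ZYEntLike f ∧ (∀ j : V, f {some j} ≤ 1) ∧ WConstraints E f ∧ h = f {none}}

/-! ## The bidirected pentagon `C5` -/

/-- The pentagon with bidirected edges: vertices `Fin 5`, edges between cyclically
adjacent vertices. -/
def E5 : Fin 5 → Fin 5 → Prop := fun i j => (i.1 + 1) % 5 = j.1 ∨ (j.1 + 1) % 5 = i.1

instance : DecidableRel E5 := fun i j => by unfold E5; infer_instance

/-! On the fixpoint set `C` of a strategy, the value `x j = g j x` is a function of the values on
`N⁻(j)`, so under any distribution supported on `C` the marginal on `N⁻(j) ∪ {j}` is a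
relabelling of the marginal on `N⁻(j)` and has the same entropy. The uniform distribution on
`C` has entropy `log_s |C|`, and `g(G,s)` is `log_s` of the largest number of fixpoints, so
applying this to an optimal strategy gives `g(G,s) ≤ E(G,s)`. -/

theorem Finset.sum_comp_eq_comp_sum_of_subsingleton_support {ι M N : Type*} [AddCommMonoid M]
    [AddCommMonoid N] {φ : M → N} (hφ : φ 0 = 0) {s : Finset ι} {f : ι → M}
    (hf : ∀ i ∈ s, ∀ j ∈ s, f i ≠ 0 → f j ≠ 0 → i = j) :
    ∑ i ∈ s, φ (f i) = φ (∑ i ∈ s, f i) := by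
  by_cases h : ∃ i ∈ s, f i ≠ 0
  · obtain ⟨i, hi, hfi⟩ := h
    have hzero : ∀ j ∈ s, j ≠ i → f j = 0 := fun j hj hji =>
      not_not.1 fun hfj => hji (hf j hj i hi hfj hfi)
    rw [sum_eq_single_of_mem i hi fun j hj hji => by rw [hzero j hj hji, hφ],
      sum_eq_single_of_mem i hi hzero]
  · push Not at h
    rw [sum_eq_zero fun i hi => by rw [h i hi, hφ], sum_eq_zero h, hφ]

section Marginals

variable {V A : Type*} [Fintype V] [DecidableEq V] [Fintype A] [DecidableEq A]

theorem marginalPMF_eq_sum_filter (p : (V → A) → ℝ) (S : Finset V) (y : ↥S → A) :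
    marginalPMF p S y = ∑ x with S.restrict x = y, p x := by
  rw [marginalPMF, sum_filter]
  simp only [funext_iff, Finset.restrict]

theorem marginalPMF_nonneg {p : (V → A) → ℝ} (hp : ∀ x, 0 ≤ p x) (S : Finset V)
    (y : ↥S → A) : 0 ≤ marginalPMF p S y := by
  rw [marginalPMF_eq_sum_filter]
  exact sum_nonneg fun x _ => hp x

theorem marginalPMF_eq_sum_fiber (p : (V → A) → ℝ) {S T : Finset V} (h : S ⊆ T)
    (z : ↥S → A) :
    marginalPMF p S z =
      ∑ y with Finset.restrict₂ (π := fun _ => A) h y = z, marginalPMF p T y := by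
  have hmaps : ∀ x ∈ ({x | S.restrict x = z} : Finset (V → A)),
      T.restrict x ∈ ({y | Finset.restrict₂ (π := fun _ => A) h y = z} : Finset (↥T → A)) :=
    fun x hx => mem_filter.2 ⟨mem_univ _, (mem_filter.1 hx).2⟩
  rw [marginalPMF_eq_sum_filter, ← sum_fiberwise_of_maps_to hmaps]
  refine sum_congr rfl fun y hy => ?_
  rw [marginalPMF_eq_sum_filter, filter_filter]
  refine sum_congr (filter_congr fun x _ => ?_) fun _ _ => rfl
  exact ⟨And.right, fun hx => ⟨by subst hx; exact (mem_filter.1 hy).2, hx⟩⟩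

theorem Hent_le_card {p : (V → A) → ℝ} (hp : ∀ x, 0 ≤ p x) (s : ℕ) (S : Finset V) :
    Hent s p S ≤ Fintype.card (↥S → A) / Real.log s := by
  refine div_le_div_of_nonneg_right ?_ (Real.log_natCast_nonneg s)
  calc ∑ y : ↥S → A, Real.negMulLog (marginalPMF p S y)
      ≤ ∑ _y : ↥S → A, (1 : ℝ) := sum_le_sum fun y _ => by
        linarith [Real.negMulLog_le_one_sub_self (marginalPMF_nonneg hp S y),
          marginalPMF_nonneg hp S y]
    _ = Fintype.card (↥S → A) := by simp

theorem Hent_eq_of_restrict_determined {p : (V → A) → ℝ} {S T : Finset V} (h : S ⊆ T)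
    (hdet : ∀ x x', p x ≠ 0 → p x' ≠ 0 → S.restrict x = S.restrict x' →
      T.restrict x = T.restrict x') (s : ℕ) :
    Hent s p T = Hent s p S := by
  have hsupp : ∀ y : ↥T → A, marginalPMF p T y ≠ 0 → ∃ x, T.restrict x = y ∧ p x ≠ 0 := by
    intro y hy
    rw [marginalPMF_eq_sum_filter] at hy
    obtain ⟨x, hx, hpx⟩ := exists_ne_zero_of_sum_ne_zero hy
    exact ⟨x, (mem_filter.1 hx).2, hpx⟩
  unfold Hent
  congr 1
  rw [← sum_fiberwise univ (Finset.restrict₂ (π := fun _ => A) h)]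
  refine sum_congr rfl fun z _ => ?_
  rw [marginalPMF_eq_sum_fiber p h]
  refine sum_comp_eq_comp_sum_of_subsingleton_support Real.negMulLog_zero ?_
  intro y hy y' hy' hmy hmy'
  obtain ⟨x, rfl, hpx⟩ := hsupp y hmy
  obtain ⟨x', rfl, hpx'⟩ := hsupp y' hmy'
  simp only [mem_filter, mem_univ, true_and, ← Function.comp_apply (f := Finset.restrict₂ h),
    Finset.restrict₂_comp_restrict] at hy hy'
  exact hdet x x' hpx hpx' (hy.trans hy'.symm)

theorem Hent_univ (p : (V → A) → ℝ) (s : ℕ) :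
    Hent s p univ = (∑ x, Real.negMulLog (p x)) / Real.log s := by
  have hbij : Function.Bijective (univ.restrict : (V → A) → ↥(univ : Finset V) → A) :=
    ⟨fun x x' hx => funext fun v => congrFun hx ⟨v, mem_univ v⟩,
      fun y => ⟨fun v => y ⟨v, mem_univ v⟩, rfl⟩⟩
  unfold Hent
  congr 1
  refine (Fintype.sum_bijective _ hbij _ _ fun x => ?_).symm
  have hfiber : ({x' | univ.restrict x' = univ.restrict x} : Finset (V → A)) = {x} := by
    ext x'
    simp [hbij.1.eq_iff]
  rw [marginalPMF_eq_sum_filter, hfiber, sum_singleton]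

end Marginals

section Uniform

variable {V A : Type*} [Fintype V] [DecidableEq A]

noncomputable def uniformOnFinset (C : Finset (V → A)) : (V → A) → ℝ :=
  fun x => if x ∈ C then (#C : ℝ)⁻¹ else 0

theorem uniformOnFinset_ne_zero_iff {C : Finset (V → A)} {x : V → A} :
    uniformOnFinset C x ≠ 0 ↔ x ∈ C := by
  by_cases hx : x ∈ C
  · simpa [uniformOnFinset, hx] using (card_pos.2 ⟨x, hx⟩).ne'
  · simp [uniformOnFinset, hx]

variable [DecidableEq V] [Fintype A]

theorem isProbDist_uniformOnFinset {C : Finset (V → A)} (hC : C.Nonempty) :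
    IsProbDist (uniformOnFinset C) := by
  refine ⟨fun x => by unfold uniformOnFinset; split_ifs <;> positivity, ?_⟩
  simp only [uniformOnFinset]
  rw [sum_ite_mem, univ_inter, sum_const, nsmul_eq_mul,
    mul_inv_cancel₀ (Nat.cast_ne_zero.2 hC.card_pos.ne')]

theorem Hent_univ_uniformOnFinset (C : Finset (V → A)) (s : ℕ) :
    Hent s (uniformOnFinset C) univ = Real.logb s #C := by
  rw [Hent_univ, Real.logb]
  congr 1
  simp only [uniformOnFinset, apply_ite Real.negMulLog, Real.negMulLog_zero]
  rw [sum_ite_mem, univ_inter, sum_const, nsmul_eq_mul, Real.negMulLog, Real.log_inv]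
  rcases eq_or_ne (#C : ℝ) 0 with hC | hC
  · simp [hC]
  · field_simp

end Uniform

section Guessing

variable {V A : Type*} [Fintype V] [DecidableEq V] [Fintype A] [DecidableEq A]
  {E : V → V → Prop} [DecidableRel E]

theorem infoConstraints_uniformOnFinset_correctSet {g : V → (V → A) → A} (hg : IsStrategy E g)
    (s : ℕ) : InfoConstraints E s (uniformOnFinset (correctSet g)) := by
  intro j
  rw [sub_eq_zero]
  refine Hent_eq_of_restrict_determined (subset_insert j _) (fun x x' hx hx' hN => ?_) s
  rw [uniformOnFinset_ne_zero_iff, correctSet, mem_filter] at hx hx'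
  funext ⟨i, hi⟩
  rcases mem_insert.1 hi with rfl | hi
  · show x i = x' i
    rw [← hx.2, ← hx'.2]
    exact hg i x x' fun k hk => congrFun hN ⟨k, by simpa [inNbr] using hk⟩
  · exact congrFun hN ⟨i, hi⟩

end Guessing

section GuessingNumber

variable {V : Type*} [Fintype V] [DecidableEq V] {E : V → V → Prop} {s : ℕ}

theorem bddAbove_card_correctSet :
    BddAbove {m : ℕ | ∃ g : V → (V → Fin s) → Fin s, IsStrategy E g ∧ m = #(correctSet g)} :=
  ⟨Fintype.card (V → Fin s), by rintro _ ⟨g, -, rfl⟩; exact card_le_univ _⟩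

variable [DecidableRel E]

theorem card_correctSet_le_maxCorrect {g : V → (V → Fin s) → Fin s} (hg : IsStrategy E g) :
    #(correctSet g) ≤ maxCorrect E s :=
  le_csSup bddAbove_card_correctSet ⟨g, hg, rfl⟩

theorem exists_card_correctSet_eq_maxCorrect {g : V → (V → Fin s) → Fin s}
    (hg : IsStrategy E g) :
    ∃ g' : V → (V → Fin s) → Fin s, IsStrategy E g' ∧ #(correctSet g') = maxCorrect E s := by
  obtain ⟨g', hg', h⟩ :=
    Nat.sSup_mem (by exact ⟨_, g, hg, rfl⟩) (bddAbove_card_correctSet (E := E))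
  exact ⟨g', hg', h.symm⟩

theorem guessingNumber_eq_logb_maxCorrect (hs : 1 < s) (h : maxCorrect E s ≠ 0) :
    guessingNumber E s = Real.logb s (maxCorrect E s) := by
  have hs' : (1 : ℝ) < s := by exact_mod_cast hs
  rw [guessingNumber, maxProb, Real.logb_div (by exact_mod_cast h) (by positivity),
    Real.logb_pow, Real.logb_self_eq_one hs']
  ring

theorem bddAbove_entropies : BddAbove {h : ℝ | ∃ p : (V → Fin s) → ℝ,
    IsProbDist p ∧ InfoConstraints E s p ∧ h = Hent s p univ} :=
  ⟨_, by rintro _ ⟨p, hp, -, rfl⟩; exact Hent_le_card hp.1 s univ⟩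

theorem logb_card_correctSet_le_graphEntropy {g : V → (V → Fin s) → Fin s}
    (hg : IsStrategy E g) (hC : (correctSet g).Nonempty) :
    Real.logb s #(correctSet g) ≤ graphEntropy E s :=
  le_csSup bddAbove_entropies ⟨_, isProbDist_uniformOnFinset hC,
    infoConstraints_uniformOnFinset_correctSet hg s, (Hent_univ_uniformOnFinset _ s).symm⟩

end GuessingNumber

/-- If the set `C` of fixpoints of a guessing strategy is nonempty, then
the uniform distribution on `C` satisfies the information constraints of `G` and has
`H(V) = log_s |C|`. Consequently `g(G,s) ≤ E(G,s)`. -/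
theorem uniform_on_fixpoints_satisfies_constraints {V : Type} [Fintype V] [DecidableEq V]
    (E : V → V → Prop) [DecidableRel E] (s : ℕ) (hs : 2 ≤ s)
    (g : V → (V → Fin s) → Fin s) (hg : IsStrategy E g)
    (hC : (correctSet g).Nonempty)
    (p : (V → Fin s) → ℝ)
    (hp : p = fun x => if x ∈ correctSet g then ((correctSet g).card : ℝ)⁻¹ else 0) :
    InfoConstraints E s p
    ∧ Hent s p Finset.univ = Real.logb s ((correctSet g).card : ℝ)
    ∧ guessingNumber E s ≤ graphEntropy E s := by
  subst hp
  obtain ⟨g', hg', hcard⟩ := exists_card_correctSet_eq_maxCorrect hg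
  have hmax : 0 < maxCorrect E s := hC.card_pos.trans_le (card_correctSet_le_maxCorrect hg)
  refine ⟨infoConstraints_uniformOnFinset_correctSet hg s, Hent_univ_uniformOnFinset _ s, ?_⟩
  rw [guessingNumber_eq_logb_maxCorrect hs hmax.ne', ← hcard]
  exact logb_card_correctSet_le_graphEntropy hg' (card_pos.1 (hcard ▸ hmax))
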